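/- arXiv:2206.01165 — 8 statements merged into one kernel-verified Lean document; each statement's English description precedes it below -/
import Mathlib

section
/- In the inclusive setup with a single bath, the reinitialization entropy production equals the mutual information between the system of interest and the bath at the final time plus the Kullback–Leibler divergence of the final bath marginal from the initial bath distribution: σ̄ = I(U;V)_{P_τ} + D(ρ_τ ‖ ρ₀), where I(U;V)_{P_τ} := H(p_τ) + H(ρ_τ) − H(P_τ) is the mutual information of the two coordinates under P_τ. -/
open scoped BigOperators

/-- Shannon entropy (natural log) of a distribution on a finite type. -/
noncomputable def shannonH {U : Type*} [Fintype U] (p : U → ℝ) : ℝ :=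
  -∑ u, p u * Real.log (p u)

/-- Kullback–Leibler divergence between two distributions on a finite type. -/
noncomputable def klDiv {U : Type*} [Fintype U] (p q : U → ℝ) : ℝ :=
  ∑ u, p u * Real.log (p u / q u)

/-!
The entropy of the joint distribution is conserved by the invertible dynamics, and initially the
joint distribution is a product, so `H(P_τ) = H(p₀) + H(ρ₀)`. Since `B = -ln ρ₀`, the heat flow is
`Q̄ = H(ρ₀) - (H(ρ_τ) + D(ρ_τ ‖ ρ₀))`, and the identity becomes linear bookkeeping.
-/

section Entropy

variable {α β : Type*} [Fintype α] [Fintype β]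

theorem shannonH_comp_equiv (p : α → ℝ) (e : β ≃ α) : shannonH (p ∘ e) = shannonH p := by
  simp only [shannonH, Function.comp_apply, Equiv.sum_comp e (fun a => p a * Real.log (p a))]

theorem mul_mul_log_mul (a b : ℝ) :
    a * b * Real.log (a * b) = b * (a * Real.log a) + a * (b * Real.log b) := by
  rcases eq_or_ne a 0 with rfl | ha
  · simp
  rcases eq_or_ne b 0 with rfl | hb
  · simp
  rw [Real.log_mul ha hb]
  ring

theorem shannonH_prod (p : α → ℝ) (q : β → ℝ) :
    shannonH (fun x : α × β => p x.1 * q x.2) =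
      (∑ b, q b) * shannonH p + (∑ a, p a) * shannonH q := by
  simp only [shannonH, Fintype.sum_prod_type, mul_mul_log_mul, Finset.sum_add_distrib,
    ← Finset.sum_mul, ← Finset.mul_sum]
  ring

theorem shannonH_prod_of_sum_eq_one {p : α → ℝ} {q : β → ℝ}
    (hp : ∑ a, p a = 1) (hq : ∑ b, q b = 1) :
    shannonH (fun x : α × β => p x.1 * q x.2) = shannonH p + shannonH q := by
  rw [shannonH_prod, hp, hq, one_mul, one_mul]

theorem klDiv_eq_sum_mul_neg_log_sub_shannonH (p : α → ℝ) {q : α → ℝ} (hq : ∀ a, q a ≠ 0) :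
    klDiv p q = ∑ a, p a * -Real.log (q a) - shannonH p := by
  simp only [klDiv, shannonH, sub_neg_eq_add, ← Finset.sum_add_distrib]
  refine Finset.sum_congr rfl fun a _ => ?_
  rcases eq_or_ne (p a) 0 with hpa | hpa
  · simp [hpa]
  · rw [Real.log_div hpa (hq a)]
    ring

end Entropy

theorem rep_eq_mutualInfo_add_klDiv_general
    {U V : Type*} [Fintype U] [Fintype V]
    (p0 : U → ℝ) (ρ0 : V → ℝ)
    (hp0sum : ∑ u, p0 u = 1)
    (hρ0 : ∀ v, 0 < ρ0 v) (hρ0sum : ∑ v, ρ0 v = 1)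
    (F : U × V ≃ U × V)
    (Pτ : U × V → ℝ)
    (hPτ : ∀ x, Pτ x = p0 (F.symm x).1 * ρ0 (F.symm x).2)
    (pτ : U → ℝ)
    (ρτ : V → ℝ)
    (B : V → ℝ) (hB : ∀ v, B v = -Real.log (ρ0 v))
    (Qbar : ℝ) (hQbar : Qbar = ∑ v, ρ0 v * B v - ∑ v, ρτ v * B v)
    (σbar : ℝ) (hσbar : σbar = (shannonH pτ - shannonH p0) - Qbar) :
    σbar = (shannonH pτ + shannonH ρτ - shannonH Pτ) + klDiv ρτ ρ0 := by
  obtain rfl : Pτ = (fun x : U × V => p0 x.1 * ρ0 x.2) ∘ F.symm := funext hPτ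
  obtain rfl : B = fun v => -Real.log (ρ0 v) := funext hB
  have hjoint : shannonH ((fun x : U × V => p0 x.1 * ρ0 x.2) ∘ F.symm) =
      shannonH p0 + shannonH ρ0 := by
    rw [shannonH_comp_equiv, shannonH_prod_of_sum_eq_one hp0sum hρ0sum]
  have hbath : ∑ v, ρ0 v * -Real.log (ρ0 v) = shannonH ρ0 := by
    simp only [shannonH, mul_neg, Finset.sum_neg_distrib]
  rw [hσbar, hQbar, hjoint, hbath, klDiv_eq_sum_mul_neg_log_sub_shannonH ρτ fun v => (hρ0 v).ne']
  ring

/-- In the inclusive setup with a single bath, the reinitialization entropy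
production equals the mutual information between the SOI and the bath at the
final time plus the KL divergence of the final bath marginal from the initial
bath distribution: σ̄ = I(U;V)_{P_τ} + D(ρ_τ ‖ ρ₀). -/
theorem rep_eq_mutualInfo_add_klDiv
    {U V : Type*} [Fintype U] [Fintype V]
    (p0 : U → ℝ) (ρ0 : V → ℝ)
    (hp0 : ∀ u, 0 ≤ p0 u) (hp0sum : ∑ u, p0 u = 1)
    (hρ0 : ∀ v, 0 < ρ0 v) (hρ0sum : ∑ v, ρ0 v = 1)
    (F : U × V ≃ U × V)
    (Pτ : U × V → ℝ)
    (hPτ : ∀ x, Pτ x = p0 (F.symm x).1 * ρ0 (F.symm x).2)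
    (pτ : U → ℝ) (hpτ : ∀ u, pτ u = ∑ v, Pτ (u, v))
    (ρτ : V → ℝ) (hρτ : ∀ v, ρτ v = ∑ u, Pτ (u, v))
    (B : V → ℝ) (hB : ∀ v, B v = -Real.log (ρ0 v))
    (Qbar : ℝ) (hQbar : Qbar = ∑ v, ρ0 v * B v - ∑ v, ρτ v * B v)
    (σbar : ℝ) (hσbar : σbar = (shannonH pτ - shannonH p0) - Qbar) :
    σbar = (shannonH pτ + shannonH ρτ - shannonH Pτ) + klDiv ρτ ρ0 :=
  rep_eq_mutualInfo_add_klDiv_general p0 ρ0 hp0sum hρ0 hρ0sum F Pτ hPτ pτ ρτ B hB Qbar hQbar σbar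
    hσbar
end

section
/- (Lemma V.1) Let L be a language over a finite alphabet Σ, let M be a minimal DFA for L, and let M' be any DFA that accepts L. Let n ∈ ℕ, let μ be any probability distribution on words over Σ of length n, let W be a random word distributed according to μ, and for each t ≤ n let S_t := M.eval(W[0..t−1]) and S'_t := M'.eval(W[0..t−1]) be the states of the two DFAs after reading the first t symbols of W. Then for every t ≤ n, the Shannon entropy of the distribution of S_t is at most the Shannon entropy of the distribution of S'_t: H(S_t) ≤ H(S'_t). Equivalently, under the unilateral decomposition (where the reinitialization entropy production at iteration t equals the entropy of the DFA's state distribution at iteration t, the start state being deterministic), the minimal DFA for L has the least entropy production of all DFAs recognizing L, at every iteration t. -/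
open scoped BigOperators

attribute [local instance] Classical.propDecidable

/-- The distribution of the state of the DFA `M` after reading the first `t`
symbols of a random word of length `n` distributed according to `μ`. -/
noncomputable def stateLaw {A : Type*} [Fintype A] {σ : Type*} (M : DFA A σ)
    {n : ℕ} (μ : (Fin n → A) → ℝ) (t : ℕ) (ht : t ≤ n) : σ → ℝ :=
  fun s => ∑ w : Fin n → A,
    if M.eval (List.ofFn fun i : Fin t => w (Fin.castLE ht i)) = s then μ w else 0

/-!
Since `M'` accepts `L`, words that `M'` sends to the same state are Nerode equivalent, so by
minimality `M` sends them to the same state too: the state of `M` is a deterministic function of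
the state of `M'`. Hence the law of `S_t` is the pushforward of the law of `S'_t` under a map, and
Shannon entropy cannot increase under a map because `x ↦ -x log x` is subadditive on `[0, ∞)`.
-/

open Real Function

noncomputable def pushforward {U V : Type*} [Fintype U] (f : U → V) (q : U → ℝ) : V → ℝ :=
  fun v => ∑ u, if f u = v then q u else 0

lemma pushforward_nonneg {U V : Type*} [Fintype U] (f : U → V) {q : U → ℝ}
    (hq : ∀ u, 0 ≤ q u) (v : V) : 0 ≤ pushforward f q v :=
  Finset.sum_nonneg fun u _ => by split_ifs <;> simp [hq u]

lemma pushforward_comp {U V W : Type*} [Fintype U] [Fintype V] (g : V → W) (f : U → V)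
    (q : U → ℝ) : pushforward (g ∘ f) q = pushforward g (pushforward f q) := by
  funext w
  simp only [pushforward, comp_apply, ← Finset.sum_filter]
  rw [← Finset.sum_fiberwise_of_maps_to (g := f) (t := {v | g v = w})
    fun u hu => by simpa using hu]
  refine Finset.sum_congr rfl fun v hv => Finset.sum_congr ?_ fun _ _ => rfl
  ext u
  simp only [Finset.mem_filter, Finset.mem_univ, true_and] at hv ⊢
  exact ⟨And.right, fun h => ⟨h ▸ hv, h⟩⟩

lemma Real.negMulLog_sum_le {ι : Type*} (s : Finset ι) {q : ι → ℝ} (hq : ∀ i ∈ s, 0 ≤ q i) :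
    negMulLog (∑ i ∈ s, q i) ≤ ∑ i ∈ s, negMulLog (q i) := by
  simp only [negMulLog, neg_mul, Finset.sum_mul, ← Finset.sum_neg_distrib]
  refine Finset.sum_le_sum fun i hi => neg_le_neg ?_
  rcases (hq i hi).eq_or_lt with h | h
  · simp [← h]
  · exact mul_le_mul_of_nonneg_left (log_le_log h (Finset.single_le_sum hq hi)) h.le

lemma shannonH_eq_sum_negMulLog {U : Type*} [Fintype U] (p : U → ℝ) :
    shannonH p = ∑ u, negMulLog (p u) := by
  simp [shannonH, negMulLog]

lemma shannonH_pushforward_le {U V : Type*} [Fintype U] [Fintype V] (f : U → V) {q : U → ℝ}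
    (hq : ∀ u, 0 ≤ q u) : shannonH (pushforward f q) ≤ shannonH q := by
  simp only [shannonH_eq_sum_negMulLog, pushforward, ← Finset.sum_filter]
  calc ∑ v, negMulLog (∑ u with f u = v, q u)
      ≤ ∑ v, ∑ u with f u = v, negMulLog (q u) :=
        Finset.sum_le_sum fun v _ => negMulLog_sum_le _ fun u _ => hq u
    _ = ∑ u, negMulLog (q u) := Finset.sum_fiberwise _ _ _

lemma DFA.factorsThrough_eval {α σ σ' : Type*} {L : Language α} (M : DFA α σ) (M' : DFA α σ')
    (hM : ∀ a b : List α, (∀ w, a ++ w ∈ L ↔ b ++ w ∈ L) → M.eval a = M.eval b)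
    (hM' : M'.accepts = L) : FactorsThrough M.eval M'.eval := by
  intro a b h
  subst hM'
  have hq : M'.accepts.leftQuotient a = M'.accepts.leftQuotient b := by
    rw [Language.leftQuotient_accepts_apply, Language.leftQuotient_accepts_apply, h]
  exact hM a b fun w => Set.ext_iff.1 hq w

lemma stateLaw_nonneg {A : Type*} [Fintype A] {σ : Type*} (M : DFA A σ) {n : ℕ}
    {μ : (Fin n → A) → ℝ} (hμ : ∀ w, 0 ≤ μ w) (t : ℕ) (ht : t ≤ n) (s : σ) :
    0 ≤ stateLaw M μ t ht s :=
  pushforward_nonneg _ hμ s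

lemma stateLaw_eq_pushforward_stateLaw {A : Type*} [Fintype A] {σ σ' : Type*} [Fintype σ']
    {M : DFA A σ} {M' : DFA A σ'} {f : σ' → σ} (hf : ∀ a, f (M'.eval a) = M.eval a) {n : ℕ}
    (μ : (Fin n → A) → ℝ) (t : ℕ) (ht : t ≤ n) :
    stateLaw M μ t ht = pushforward f (stateLaw M' μ t ht) := by
  change pushforward _ μ = pushforward f (pushforward _ μ)
  rw [← pushforward_comp]
  simp only [comp_def, hf]

theorem minimal_dfa_least_entropy_general
    {A : Type*} [Fintype A] {σ σ' : Type*} [Fintype σ] [Fintype σ']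
    (L : Language A) (M : DFA A σ) (M' : DFA A σ')
    (hMmin : ∀ a b : List A, M.eval a = M.eval b ↔ ∀ w : List A, a ++ w ∈ L ↔ b ++ w ∈ L)
    (hM'acc : M'.accepts = L)
    (n : ℕ) (μ : (Fin n → A) → ℝ)
    (hμ : ∀ w, 0 ≤ μ w)
    (t : ℕ) (ht : t ≤ n) :
    shannonH (stateLaw M μ t ht) ≤ shannonH (stateLaw M' μ t ht) := by
  have hfactor : FactorsThrough M.eval M'.eval :=
    M.factorsThrough_eval M' (fun a b => (hMmin a b).2) hM'acc
  rw [stateLaw_eq_pushforward_stateLaw (hfactor.extend_apply fun _ => M.start)]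
  exact shannonH_pushforward_le _ (stateLaw_nonneg M' hμ t ht)

/-- (Lemma V.1) For any language L, any minimal DFA M for L, any DFA M' accepting L,
any distribution μ on words of length n, and any iteration t ≤ n, the Shannon
entropy of the state distribution of M at iteration t is at most that of M'. -/
theorem minimal_dfa_least_entropy
    {A : Type*} [Fintype A] {σ σ' : Type*} [Fintype σ] [Fintype σ']
    (L : Language A) (M : DFA A σ) (M' : DFA A σ')
    (hMacc : M.accepts = L)
    (hMmin : ∀ a b : List A, M.eval a = M.eval b ↔ ∀ w : List A, a ++ w ∈ L ↔ b ++ w ∈ L)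
    (hM'acc : M'.accepts = L)
    (n : ℕ) (μ : (Fin n → A) → ℝ)
    (hμ : ∀ w, 0 ≤ μ w) (hμsum : ∑ w, μ w = 1)
    (t : ℕ) (ht : t ≤ n) :
    shannonH (stateLaw M μ t ht) ≤ shannonH (stateLaw M' μ t ht) :=
  minimal_dfa_least_entropy_general L M M' hMmin hM'acc n μ hμ t ht
end

section
/- Let L be a language over a finite alphabet Σ, let M be a minimal DFA for L, and let M' be any DFA that accepts L. Then the state equivalence induced by M' refines that of M: for all words a, b over Σ, if M'.eval a = M'.eval b then M.eval a = M.eval b. -/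
theorem DFA.leftQuotient_accepts_eq_of_eval_eq {α σ : Type*} (M : DFA α σ) {a b : List α}
    (h : M.eval a = M.eval b) : M.accepts.leftQuotient a = M.accepts.leftQuotient b := by
  rw [Language.leftQuotient_accepts_apply, Language.leftQuotient_accepts_apply, h]

theorem minimal_dfa_equivalence_coarsest_general
    {A : Type*} {σ σ' : Type*}
    (L : Language A) (M : DFA A σ) (M' : DFA A σ')
    (hMmin : ∀ a b : List A, M.eval a = M.eval b ↔ ∀ w : List A, a ++ w ∈ L ↔ b ++ w ∈ L)
    (hM'acc : M'.accepts = L) :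
    ∀ a b : List A, M'.eval a = M'.eval b → M.eval a = M.eval b := by
  intro a b h
  subst hM'acc
  exact (hMmin a b).2 fun w => Set.ext_iff.1 (M'.leftQuotient_accepts_eq_of_eval_eq h) w

/-- Let L be a language over an alphabet, M a minimal DFA for L, and M' any DFA
that accepts L. Then the state equivalence induced by M' refines that of M:
whenever M' sends two words to the same state, so does M. -/
theorem minimal_dfa_equivalence_coarsest
    {A : Type*} {σ σ' : Type*} [Fintype σ] [Fintype σ']
    (L : Language A) (M : DFA A σ) (M' : DFA A σ')
    (hMacc : M.accepts = L)
    (hMmin : ∀ a b : List A, M.eval a = M.eval b ↔ ∀ w : List A, a ++ w ∈ L ↔ b ++ w ∈ L)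
    (hM'acc : M'.accepts = L) :
    ∀ a b : List A, M'.eval a = M'.eval b → M.eval a = M.eval b :=
  minimal_dfa_equivalence_coarsest_general L M M' hMmin hM'acc
end

section
/- (Theorem V.2) Let L be a language over a finite alphabet Σ, let M be a minimal DFA for L, and let M' be any DFA that accepts L. Let n ∈ ℕ, let μ be any probability distribution on words over Σ of length n, let W ∼ μ, and for t ≤ n let S_t := M.eval(W[0..t−1]) and S'_t := M'.eval(W[0..t−1]). Let V_t := h(W) for an arbitrary function h (the bath state at iteration t, identical for both machines). Then for every t ≤ n, I(S_t ; V_t) ≤ I(S'_t ; V_t). Consequently, defining for each machine the reinitialization entropy production σ̄ := I(state at t ; V_t) + D(law(V_t) ‖ ρ₀), where the divergence term D(law(V_t) ‖ ρ₀) is common to both machines, the minimal DFA satisfies σ̄_M ≤ σ̄_{M'}. -/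
/-!
Since `M'` accepts `L`, two words reaching the same state of `M'` are Nerode equivalent, so by
minimality they reach the same state of `M`: the state of `M` is a function `f` of the state of
`M'`, i.e. `S_t = f S'_t`. The claim is then the data-processing inequality
`I(f X; Y) ≤ I(X; Y)`, equivalently `H(Y | X) ≤ H(Y | f X)`, which follows from the log-sum
inequality applied on each fibre of `f`; the divergence term is the same on both sides.
-/

open scoped BigOperators

attribute [local instance] Classical.propDecidable

/-- The joint distribution of the state of `M` at iteration `t` and the bath
state `h W`. -/
noncomputable def jointLaw {A : Type*} [Fintype A] {σ R : Type*} (M : DFA A σ)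
    {n : ℕ} (μ : (Fin n → A) → ℝ) (h : (Fin n → A) → R) (t : ℕ) (ht : t ≤ n) :
    σ × R → ℝ :=
  fun x => ∑ w : Fin n → A,
    if M.eval (List.ofFn fun i : Fin t => w (Fin.castLE ht i)) = x.1 ∧ h w = x.2
    then μ w else 0

/-- The distribution of the bath state `h W`. -/
noncomputable def bathLaw {A : Type*} [Fintype A] {R : Type*}
    {n : ℕ} (μ : (Fin n → A) → ℝ) (h : (Fin n → A) → R) : R → ℝ :=
  fun r => ∑ w : Fin n → A, if h w = r then μ w else 0

/-- Mutual information I(S_t ; V_t) between the state of `M` at iteration `t`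
and the bath state `h W`: I(X;Y) = H(X) + H(Y) − H(X,Y). -/
noncomputable def stateBathMI {A : Type*} [Fintype A] {σ R : Type*} [Fintype σ]
    [Fintype R] (M : DFA A σ) {n : ℕ} (μ : (Fin n → A) → ℝ)
    (h : (Fin n → A) → R) (t : ℕ) (ht : t ≤ n) : ℝ :=
  shannonH (stateLaw M μ t ht) + shannonH (bathLaw μ h) - shannonH (jointLaw M μ h t ht)

open Finset Real

section LogSum

theorem sum_mul_log_div_sum_le {ι : Type*} (T : Finset ι) (a b : ι → ℝ)
    (ha : ∀ i ∈ T, 0 ≤ a i) (hb : ∀ i ∈ T, 0 ≤ b i) (hab : ∀ i ∈ T, b i = 0 → a i = 0) :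
    (∑ i ∈ T, a i) * log ((∑ i ∈ T, a i) / ∑ i ∈ T, b i) ≤
      ∑ i ∈ T, a i * log (a i / b i) := by
  -- Jensen for the convex `x ↦ x log x`, with weights `b i / ∑ j, b j` at the points `a i / b i`.
  have hcancel : ∀ i ∈ T, ∀ c, (a i = 0 → c = 0) → b i * (c / b i) = c := fun i hi c hc => by
    rcases eq_or_ne (b i) 0 with h0 | h0
    · simp [h0, hc (hab i hi h0)]
    · exact mul_div_cancel₀ _ h0
  rcases (sum_nonneg hb).eq_or_lt with hB | hB
  · have hb0 : ∀ i ∈ T, b i = 0 := (sum_eq_zero_iff_of_nonneg hb).mp hB.symm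
    rw [sum_eq_zero fun i hi => hab i hi (hb0 i hi), zero_mul]
    exact sum_nonneg fun i hi => by simp [hab i hi (hb0 i hi)]
  have jensen := convexOn_mul_log.map_sum_le (t := T) (w := fun i => b i / ∑ j ∈ T, b j)
    (p := fun i => a i / b i) (fun i hi => div_nonneg (hb i hi) hB.le)
    (by rw [← sum_div, div_self hB.ne']) (fun i hi => div_nonneg (ha i hi) (hb i hi))
  simp only [smul_eq_mul, div_mul_eq_mul_div, ← sum_div] at jensen
  rwa [sum_congr rfl fun i hi => hcancel i hi _ fun h => by simp [h],
    sum_congr rfl fun i hi => hcancel i hi _ fun h => by simp [h],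
    div_le_div_iff_of_pos_right hB] at jensen

end LogSum

section PushLaw

variable {W X Y S : Type*} [Fintype W]

noncomputable def pushLaw (μ : W → ℝ) (g : W → X) : X → ℝ :=
  fun x => ∑ w, if g w = x then μ w else 0

theorem pushLaw_nonneg {μ : W → ℝ} (hμ : ∀ w, 0 ≤ μ w) (g : W → X) (x : X) :
    0 ≤ pushLaw μ g x :=
  sum_nonneg fun w _ => by split_ifs <;> simp [hμ w]

theorem pushLaw_apply_eq_sum_filter (μ : W → ℝ) (g : W → X) (x : X) :
    pushLaw μ g x = ∑ w ∈ univ.filter (g · = x), μ w :=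
  (sum_filter _ _).symm

theorem pushLaw_pushLaw [Fintype X] (μ : W → ℝ) (g : W → X) (f : X → S) :
    pushLaw (pushLaw μ g) f = pushLaw μ (f ∘ g) := by
  ext s
  simp only [pushLaw, Function.comp_apply]
  calc ∑ x, (if f x = s then ∑ w, if g w = x then μ w else 0 else 0)
      = ∑ x, ∑ w, if g w = x then (if f x = s then μ w else 0) else 0 :=
        sum_congr rfl fun x _ => by split_ifs <;> simp [*]
    _ = ∑ w, if f (g w) = s then μ w else 0 := by
        rw [sum_comm]; simp

theorem pushLaw_fst_apply [Fintype X] [Fintype Y] (p : X × Y → ℝ) (x : X) :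
    pushLaw p Prod.fst x = ∑ y, p (x, y) := by
  rw [pushLaw, Fintype.sum_prod_type, Fintype.sum_eq_single x fun x' hx' => by simp [hx']]
  simp

theorem pushLaw_map_apply [Fintype X] [Fintype Y] (p : X × Y → ℝ) (f : X → S) (s : S) (y : Y) :
    pushLaw p (Prod.map f id) (s, y) = ∑ x ∈ univ.filter (f · = s), p (x, y) := by
  rw [pushLaw, Fintype.sum_prod_type, sum_filter]
  refine sum_congr rfl fun x _ => ?_
  rw [Fintype.sum_eq_single y fun y' hy' => by simp [hy']]
  simp

end PushLaw

section CondEntropy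

variable {X Y S : Type*} [Fintype X] [Fintype Y] {p : X × Y → ℝ}

noncomputable def condEntropy (p : X × Y → ℝ) : ℝ :=
  -∑ x, ∑ y, p (x, y) * log (p (x, y) / pushLaw p Prod.fst x)

theorem le_pushLaw_fst (hp : ∀ z, 0 ≤ p z) (x : X) (y : Y) : p (x, y) ≤ pushLaw p Prod.fst x := by
  rw [pushLaw_fst_apply]
  exact single_le_sum (fun y _ => hp (x, y)) (mem_univ y)

theorem shannonH_sub_shannonH_fst (hp : ∀ z, 0 ≤ p z) :
    shannonH p - shannonH (pushLaw p Prod.fst) = condEntropy p := by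
  have hlog : ∀ x y, p (x, y) * log (p (x, y) / pushLaw p Prod.fst x) =
      p (x, y) * log (p (x, y)) - p (x, y) * log (pushLaw p Prod.fst x) := by
    intro x y
    rcases (hp (x, y)).eq_or_lt with h0 | hpos
    · simp [← h0]
    · rw [log_div hpos.ne' (hpos.trans_le (le_pushLaw_fst hp x y)).ne', mul_sub]
  have hmarg : ∀ x, ∑ y, p (x, y) * log (pushLaw p Prod.fst x) =
      pushLaw p Prod.fst x * log (pushLaw p Prod.fst x) := fun x => by
    rw [← sum_mul, pushLaw_fst_apply]
  simp only [condEntropy, shannonH, hlog, sum_sub_distrib, hmarg, Fintype.sum_prod_type]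
  ring

theorem condEntropy_le_condEntropy_map [Fintype S] (hp : ∀ z, 0 ≤ p z) (f : X → S) :
    condEntropy p ≤ condEntropy (pushLaw p (Prod.map f id)) := by
  have hmarg : ∀ s, pushLaw (pushLaw p (Prod.map f id)) Prod.fst s =
      ∑ x ∈ univ.filter (f · = s), pushLaw p Prod.fst x := fun s => by
    rw [pushLaw_pushLaw, show Prod.fst ∘ Prod.map f id = f ∘ Prod.fst from rfl,
      ← pushLaw_pushLaw, pushLaw_apply_eq_sum_filter]
  rw [condEntropy, condEntropy, neg_le_neg_iff, sum_comm, sum_comm (γ := X)]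
  refine sum_le_sum fun y _ => ?_
  rw [← sum_fiberwise univ f]
  refine sum_le_sum fun s _ => ?_
  rw [pushLaw_map_apply, hmarg]
  exact sum_mul_log_div_sum_le _ _ _ (fun x _ => hp _) (fun x _ => pushLaw_nonneg hp _ _)
    fun x _ h0 => le_antisymm (h0 ▸ le_pushLaw_fst hp x y) (hp _)

end CondEntropy

theorem DFA.eval_factorsThrough {A σ σ' : Type*} {L : Language A} {M : DFA A σ} {M' : DFA A σ'}
    (hM : ∀ a b : List A, (∀ w, a ++ w ∈ L ↔ b ++ w ∈ L) → M.eval a = M.eval b)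
    (hM' : M'.accepts = L) : M.eval.FactorsThrough M'.eval := by
  intro a b hab
  refine hM a b fun w => ?_
  have hquot := congrArg M'.acceptsFrom hab
  rw [← Language.leftQuotient_accepts_apply, ← Language.leftQuotient_accepts_apply, hM'] at hquot
  exact Set.ext_iff.mp hquot w

section StateLaws

variable {A σ σ' R : Type*} [Fintype A] {n t : ℕ} (μ : (Fin n → A) → ℝ) (h : (Fin n → A) → R)
  (ht : t ≤ n)

def prefixState (M : DFA A σ) (w : Fin n → A) : σ :=
  M.eval (List.ofFn fun i : Fin t => w (Fin.castLE ht i))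

theorem jointLaw_eq_pushLaw (M : DFA A σ) :
    jointLaw M μ h t ht = pushLaw μ (fun w => (prefixState ht M w, h w)) := by
  ext x
  simp only [jointLaw, pushLaw, prefixState, Prod.ext_iff]

variable {μ} in
theorem jointLaw_nonneg (hμ : ∀ w, 0 ≤ μ w) (M : DFA A σ) (z : σ × R) :
    0 ≤ jointLaw M μ h t ht z := by
  rw [jointLaw_eq_pushLaw]
  exact pushLaw_nonneg hμ _ z

variable [Fintype σ] [Fintype σ'] [Fintype R]

theorem stateLaw_eq_pushLaw_fst (M : DFA A σ) :
    stateLaw M μ t ht = pushLaw (jointLaw M μ h t ht) Prod.fst := by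
  rw [jointLaw_eq_pushLaw, pushLaw_pushLaw]
  rfl

variable {μ}

theorem stateBathMI_eq_sub_condEntropy (hμ : ∀ w, 0 ≤ μ w) (M : DFA A σ) :
    stateBathMI M μ h t ht = shannonH (bathLaw μ h) - condEntropy (jointLaw M μ h t ht) := by
  rw [stateBathMI, ← shannonH_sub_shannonH_fst (jointLaw_nonneg h ht hμ M),
    ← stateLaw_eq_pushLaw_fst]
  ring

theorem stateBathMI_le_of_factorsThrough (hμ : ∀ w, 0 ≤ μ w) {M : DFA A σ} {M' : DFA A σ'}
    (hf : M.eval.FactorsThrough M'.eval) :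
    stateBathMI M μ h t ht ≤ stateBathMI M' μ h t ht := by
  set f := Function.extend M'.eval M.eval fun _ => M.start
  have hjoint : jointLaw M μ h t ht = pushLaw (jointLaw M' μ h t ht) (Prod.map f id) := by
    rw [jointLaw_eq_pushLaw, jointLaw_eq_pushLaw, pushLaw_pushLaw]
    congr
    funext w
    simp [prefixState, f, hf.extend_apply]
  rw [stateBathMI_eq_sub_condEntropy h ht hμ, stateBathMI_eq_sub_condEntropy h ht hμ, hjoint]
  exact sub_le_sub_left (condEntropy_le_condEntropy_map (jointLaw_nonneg h ht hμ M') f) _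

end StateLaws

theorem minimal_dfa_least_EP_general
    {A : Type*} [Fintype A] {σ σ' R : Type*} [Fintype σ] [Fintype σ'] [Fintype R]
    (L : Language A) (M : DFA A σ) (M' : DFA A σ')
    (hMmin : ∀ a b : List A, M.eval a = M.eval b ↔ ∀ w : List A, a ++ w ∈ L ↔ b ++ w ∈ L)
    (hM'acc : M'.accepts = L)
    (n : ℕ) (μ : (Fin n → A) → ℝ)
    (hμ : ∀ w, 0 ≤ μ w)
    (h : (Fin n → A) → R)
    (ρ0 : R → ℝ)
    (t : ℕ) (ht : t ≤ n) :
    stateBathMI M μ h t ht ≤ stateBathMI M' μ h t ht ∧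
      stateBathMI M μ h t ht + klDiv (bathLaw μ h) ρ0 ≤
        stateBathMI M' μ h t ht + klDiv (bathLaw μ h) ρ0 := by
  have hfactor := DFA.eval_factorsThrough (fun a b => (hMmin a b).mpr) hM'acc
  have hMI := stateBathMI_le_of_factorsThrough h ht hμ hfactor
  exact ⟨hMI, add_le_add_left hMI _⟩

/-- (Theorem V.2) For any language L, minimal DFA M for L, DFA M' accepting L,
distribution μ on words of length n, bath variable V_t = h(W), and iteration
t ≤ n: I(S_t ; V_t) ≤ I(S'_t ; V_t); consequently, with the common divergence
term D(law(V_t) ‖ ρ₀), the reinitialization entropy production of the minimal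
DFA is at most that of M': σ̄_M ≤ σ̄_{M'}. -/
theorem minimal_dfa_least_EP
    {A : Type*} [Fintype A] {σ σ' R : Type*} [Fintype σ] [Fintype σ'] [Fintype R]
    (L : Language A) (M : DFA A σ) (M' : DFA A σ')
    (hMacc : M.accepts = L)
    (hMmin : ∀ a b : List A, M.eval a = M.eval b ↔ ∀ w : List A, a ++ w ∈ L ↔ b ++ w ∈ L)
    (hM'acc : M'.accepts = L)
    (n : ℕ) (μ : (Fin n → A) → ℝ)
    (hμ : ∀ w, 0 ≤ μ w) (hμsum : ∑ w, μ w = 1)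
    (h : (Fin n → A) → R)
    (ρ0 : R → ℝ) (hρ0 : ∀ r, 0 < ρ0 r) (hρ0sum : ∑ r, ρ0 r = 1)
    (t : ℕ) (ht : t ≤ n) :
    stateBathMI M μ h t ht ≤ stateBathMI M' μ h t ht ∧
      stateBathMI M μ h t ht + klDiv (bathLaw μ h) ρ0 ≤
        stateBathMI M' μ h t ht + klDiv (bathLaw μ h) ρ0 :=
  minimal_dfa_least_EP_general L M M' hMmin hM'acc n μ hμ h ρ0 t ht
end

section
/- (Integral fluctuation theorem) In the inclusive setup with a single bath, with trajectory-level entropy production σ(u₀,v₀) := [ln p₀(u₀) − ln p_τ(u_τ)] − [B(v₀) − B(v_τ)] for (u_τ,v_τ) := F(u₀,v₀), the expectation of e^{−σ} over the forward process satisfies Σ_{(u₀,v₀) : p₀(u₀) > 0} p₀(u₀)·ρ₀(v₀)·e^{−σ(u₀,v₀)} = 1 − κ, where κ := Σ_{(u',v') : p₀((F⁻¹(u',v')).1) = 0} p_τ(u')·ρ₀(v') is the probability under the reverse process of producing a trajectory whose forward version cannot occur. -/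
/-!
Pointwise, the forward weight of a trajectory times `e^{-σ}` is the reverse weight
`pτ(u_τ) ρ₀(v_τ)` of its image under `F` (detailed fluctuation theorem), since
`B(v₀) - B(v_τ) = ln ρ₀(v_τ) - ln ρ₀(v₀)`. Summing over the
forward support and reindexing by the bijection `F` gives the reverse mass of the final states whose
preimage can occur, which is `1 - κ` because the reverse process is a probability distribution.
-/

open scoped BigOperators

attribute [local instance] Classical.propDecidable

open Finset Real

namespace FluctuationTheorem

lemma sum_prod_mul_eq_one {α β : Type*} [Fintype α] [Fintype β] {f : α → ℝ} {g : β → ℝ}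
    (hf : ∑ a, f a = 1) (hg : ∑ b, g b = 1) : ∑ x : α × β, f x.1 * g x.2 = 1 := by
  rw [Fintype.sum_prod_type, ← Fintype.sum_mul_sum, hf, hg, one_mul]

lemma sum_filter_pos_add_sum_filter_eq_zero {α : Type*} [Fintype α] {f : α → ℝ}
    (hf : ∀ a, 0 ≤ f a) (g : α → ℝ) :
    ∑ a ∈ univ.filter (fun a => 0 < f a), g a + ∑ a ∈ univ.filter (fun a => f a = 0), g a
      = ∑ a, g a := by
  have hzero : univ.filter (fun a => f a = 0) = univ.filter (fun a => ¬ 0 < f a) :=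
    filter_congr fun a _ => ⟨fun h => h.le.not_gt, fun h => le_antisymm (not_lt.1 h) (hf a)⟩
  rw [hzero, sum_filter_add_sum_filter_not]

lemma mul_exp_log_sub_log {a c : ℝ} (ha : 0 < a) (hc : 0 < c) :
    a * exp (log c - log a) = c := by
  rw [exp_sub, exp_log ha, exp_log hc]
  field_simp

end FluctuationTheorem

open FluctuationTheorem

/-- (Integral fluctuation theorem) In the inclusive setup with a single bath,
the expectation of e^{−σ} over the forward process equals 1 − κ, where κ is the
probability, under the reverse process, of producing a trajectory whose forward
version cannot occur. -/
theorem integral_fluctuation_theorem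
    {U V : Type*} [Fintype U] [Fintype V]
    (p0 : U → ℝ) (ρ0 : V → ℝ)
    (hp0 : ∀ u, 0 ≤ p0 u) (hp0sum : ∑ u, p0 u = 1)
    (hρ0 : ∀ v, 0 < ρ0 v) (hρ0sum : ∑ v, ρ0 v = 1)
    (F : U × V ≃ U × V)
    (Pτ : U × V → ℝ)
    (hPτ : ∀ x, Pτ x = p0 (F.symm x).1 * ρ0 (F.symm x).2)
    (pτ : U → ℝ) (hpτ : ∀ u, pτ u = ∑ v, Pτ (u, v))
    (B : V → ℝ) (hB : ∀ v, B v = -Real.log (ρ0 v))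
    (σ : U × V → ℝ)
    (hσ : ∀ x : U × V, σ x =
      (Real.log (p0 x.1) - Real.log (pτ (F x).1)) - (B x.2 - B (F x).2))
    (κ : ℝ)
    (hκ : κ = ∑ x ∈ Finset.univ.filter (fun x : U × V => p0 (F.symm x).1 = 0),
      pτ x.1 * ρ0 x.2) :
    ∑ x ∈ Finset.univ.filter (fun x : U × V => 0 < p0 x.1),
      p0 x.1 * ρ0 x.2 * Real.exp (-σ x) = 1 - κ := by
  have hPτ_nonneg : ∀ x, 0 ≤ Pτ x := fun x => hPτ x ▸ mul_nonneg (hp0 _) (hρ0 _).le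
  have hpτ_pos : ∀ x : U × V, 0 < p0 x.1 → 0 < pτ (F x).1 := fun x hx => by
    have hPτx : 0 < Pτ (F x) := by
      rw [hPτ, F.symm_apply_apply]
      exact mul_pos hx (hρ0 _)
    rw [hpτ]
    exact sum_pos' (fun v _ => hPτ_nonneg _) ⟨(F x).2, mem_univ _, hPτx⟩
  have hdetailed : ∀ x : U × V, 0 < p0 x.1 →
      p0 x.1 * ρ0 x.2 * exp (-σ x) = pτ (F x).1 * ρ0 (F x).2 := fun x hx => by
    have hσx : -σ x = log (pτ (F x).1 * ρ0 (F x).2) - log (p0 x.1 * ρ0 x.2) := by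
      rw [hσ, hB, hB, log_mul (hpτ_pos x hx).ne' (hρ0 _).ne', log_mul hx.ne' (hρ0 _).ne']
      ring
    rw [hσx, mul_exp_log_sub_log (mul_pos hx (hρ0 _)) (mul_pos (hpτ_pos x hx) (hρ0 _))]
  have hpτ_sum : ∑ u, pτ u = 1 :=
    calc ∑ u, pτ u = ∑ x, Pτ x := by simp_rw [hpτ, Fintype.sum_prod_type]
      _ = ∑ x : U × V, p0 x.1 * ρ0 x.2 := by
        simp_rw [hPτ]
        exact F.symm.sum_comp fun y => p0 y.1 * ρ0 y.2
      _ = 1 := sum_prod_mul_eq_one hp0sum hρ0sum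
  calc _ = ∑ y ∈ univ.filter (fun y : U × V => 0 < p0 (F.symm y).1), pτ y.1 * ρ0 y.2 :=
        sum_equiv F (by simp) fun x hx => hdetailed x (by simpa using hx)
    _ = 1 - κ := by
      rw [hκ, ← sum_prod_mul_eq_one hpτ_sum hρ0sum,
        ← sum_filter_pos_add_sum_filter_eq_zero (fun y => hp0 (F.symm y).1)]
      ring
end

section
/- (Mismatch cost theorem for the inclusive Hamiltonian framework) In the mismatch setup, suppose α is a probability distribution on U with full support that minimizes σ̄ over all probability distributions on U. Then for every probability distribution β on U, the mismatch cost satisfies 𝒲 := σ̄(β) − σ̄(α) = D(β ‖ α) − D(Tβ ‖ Tα); in particular 𝒲 ≥ 0. -/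
open scoped BigOperators

/-- Action of a Markov kernel `T` (where `T u` is the distribution `T(·|u)`) on
a distribution `p`: `(Tp)(u') = Σ_u p(u)·T(u'|u)`. -/
noncomputable def kernelAct {U : Type*} [Fintype U] (T : U → U → ℝ) (p : U → ℝ) :
    U → ℝ :=
  fun u' => ∑ u, p u * T u u'

/-- The entropy production functional of the mismatch setup:
σ̄(p) = H(Tp) − H(p) − Σ_u p(u)·Q(u). -/
noncomputable def epFunctional {U : Type*} [Fintype U] (T : U → U → ℝ)
    (Q : U → ℝ) (p : U → ℝ) : ℝ :=
  shannonH (kernelAct T p) - shannonH p - ∑ u, p u * Q u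

/-!
Relative to a full-support `α`, the functional splits as
`σ̄(p) = D(p‖α) − D(Tp‖Tα) + Σ_u p(u) c(u)` with a potential `c` depending only on `α`.
At `p = α` this reads `σ̄(α) = Σ α c`. Perturbing `α` towards a point mass `δ_u` costs
`D(p‖α) = O(λ²)` by the χ² bound while moving the linear term by `λ (c(u) − Σ α c)`, and
`D(Tp‖Tα) ≥ 0`; so minimality forces `c(u) ≥ Σ α c` for all `u`, hence `c` is constant
(`α` has full support). Then `σ̄(β) − σ̄(α) = D(β‖α) − D(Tβ‖Tα)`, nonnegative by minimality.
-/

open Real Finset Filter Topology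

lemma sub_le_mul_log_div {p q : ℝ} (hp : 0 ≤ p) (hq : 0 ≤ q) (hqp : q = 0 → p = 0) :
    p - q ≤ p * log (p / q) := by
  rcases hp.eq_or_lt with rfl | hp
  · simpa using hq
  have hq : 0 < q := hq.lt_of_ne fun h => hp.ne' (hqp h.symm)
  have h := one_sub_inv_le_log_of_pos (div_pos hp hq)
  rw [inv_div] at h
  calc p - q = p * (1 - q / p) := by field_simp
    _ ≤ p * log (p / q) := mul_le_mul_of_nonneg_left h hp.le

lemma mul_log_div_le {p q : ℝ} (hp : 0 ≤ p) (hq : 0 < q) :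
    p * log (p / q) ≤ p * (p - q) / q := by
  rcases hp.eq_or_lt with rfl | hp
  · simp
  calc p * log (p / q) ≤ p * (p / q - 1) :=
        mul_le_mul_of_nonneg_left (log_le_sub_one_of_pos (div_pos hp hq)) hp.le
    _ = p * (p - q) / q := by field_simp

lemma nonpos_of_forall_mul_le_mul_sq {a K : ℝ}
    (h : ∀ t : ℝ, 0 < t → t < 1 → t * a ≤ K * t ^ 2) : a ≤ 0 := by
  have hlim : Tendsto (fun t => K * t) (𝓝[>] 0) (𝓝 0) := by
    simpa using ((continuous_const_mul K).tendsto 0).mono_left nhdsWithin_le_nhds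
  refine ge_of_tendsto hlim ?_
  filter_upwards [Ioo_mem_nhdsGT one_pos] with t ⟨ht0, ht1⟩
  exact le_of_mul_le_mul_left (by linarith [h t ht0 ht1]) ht0

section FiniteDistributions

variable {U : Type*} [Fintype U]

lemma eq_sum_mul_of_forall_sum_mul_le {α c : U → ℝ} (hα : ∀ u, 0 < α u)
    (hαsum : ∑ u, α u = 1) (h : ∀ u, ∑ v, α v * c v ≤ c u) (u : U) :
    c u = ∑ v, α v * c v := by
  set m := ∑ v, α v * c v
  have hzero : ∑ v, α v * (c v - m) = 0 := by
    simp only [mul_sub, sum_sub_distrib, ← sum_mul, hαsum, one_mul, m, sub_self]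
  have hu := (sum_eq_zero_iff_of_nonneg fun v _ =>
    mul_nonneg (hα v).le (sub_nonneg.mpr (h v))).mp hzero u (mem_univ u)
  linarith [(mul_eq_zero.mp hu).resolve_left (hα u).ne']

lemma klDiv_self (p : U → ℝ) : klDiv p p = 0 :=
  sum_eq_zero fun u _ => by simp

lemma klDiv_eq_sum_sub_sum {p q : U → ℝ} (hqp : ∀ u, q u = 0 → p u = 0) :
    klDiv p q = ∑ u, p u * log (p u) - ∑ u, p u * log (q u) := by
  rw [klDiv, ← sum_sub_distrib]
  refine sum_congr rfl fun u _ => ?_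
  rcases eq_or_ne (p u) 0 with hp | hp
  · simp [hp]
  · rw [log_div hp fun hq => hp (hqp u hq)]
    ring

lemma klDiv_nonneg {p q : U → ℝ} (hp : ∀ u, 0 ≤ p u) (hq : ∀ u, 0 ≤ q u)
    (hqp : ∀ u, q u = 0 → p u = 0) (hsum : ∑ u, p u = ∑ u, q u) : 0 ≤ klDiv p q :=
  calc (0 : ℝ) = ∑ u, (p u - q u) := by rw [sum_sub_distrib, hsum, sub_self]
    _ ≤ klDiv p q := sum_le_sum fun u _ => sub_le_mul_log_div (hp u) (hq u) (hqp u)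

lemma klDiv_le_sum_sq_div {p q : U → ℝ} (hp : ∀ u, 0 ≤ p u) (hq : ∀ u, 0 < q u)
    (hsum : ∑ u, p u = ∑ u, q u) : klDiv p q ≤ ∑ u, (p u - q u) ^ 2 / q u :=
  calc klDiv p q ≤ ∑ u, p u * (p u - q u) / q u :=
        sum_le_sum fun u _ => mul_log_div_le (hp u) (hq u)
    _ = ∑ u, ((p u - q u) ^ 2 / q u + (p u - q u)) :=
        sum_congr rfl fun u _ => by field_simp [(hq u).ne']; ring
    _ = ∑ u, (p u - q u) ^ 2 / q u := by
        rw [sum_add_distrib, sum_sub_distrib, hsum, sub_self, add_zero]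

variable (T : U → U → ℝ)

lemma kernelAct_nonneg (hT : ∀ u u', 0 ≤ T u u') {p : U → ℝ} (hp : ∀ u, 0 ≤ p u) (u' : U) :
    0 ≤ kernelAct T p u' :=
  sum_nonneg fun u _ => mul_nonneg (hp u) (hT u u')

lemma sum_kernelAct (hT : ∀ u, ∑ u', T u u' = 1) (p : U → ℝ) :
    ∑ u', kernelAct T p u' = ∑ u, p u := by
  simp only [kernelAct]
  rw [sum_comm]
  simp only [← mul_sum, hT, mul_one]

lemma kernelAct_eq_zero_of_kernelAct_eq_zero (hT : ∀ u u', 0 ≤ T u u') {α : U → ℝ}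
    (hα : ∀ u, 0 < α u) (p : U → ℝ) {u' : U} (h : kernelAct T α u' = 0) :
    kernelAct T p u' = 0 := by
  have hT0 : ∀ u, T u u' = 0 := fun u =>
    (mul_eq_zero.mp ((sum_eq_zero_iff_of_nonneg fun v _ =>
      mul_nonneg (hα v).le (hT v u')).mp h u (mem_univ u))).resolve_left (hα u).ne'
  simp [kernelAct, hT0]

/-- The gradient `∂σ̄/∂p(u)` of `σ̄` at `p = α`. -/
noncomputable def epPotential (Q α : U → ℝ) (u : U) : ℝ :=
  log (α u) - Q u - ∑ u', T u u' * log (kernelAct T α u')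

variable {T} (Q : U → ℝ) {α : U → ℝ}

lemma epFunctional_eq_klDiv_sub_klDiv_add (hT : ∀ u u', 0 ≤ T u u') (hα : ∀ u, 0 < α u)
    (p : U → ℝ) :
    epFunctional T Q p = klDiv p α - klDiv (kernelAct T p) (kernelAct T α)
      + ∑ u, p u * epPotential T Q α u := by
  have hcross : ∑ u', kernelAct T p u' * log (kernelAct T α u')
      = ∑ u, p u * ∑ u', T u u' * log (kernelAct T α u') := by
    simp only [kernelAct, sum_mul, mul_sum, mul_assoc]
    exact sum_comm
  rw [epFunctional, shannonH, shannonH,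
    klDiv_eq_sum_sub_sum fun u h => absurd h (hα u).ne',
    klDiv_eq_sum_sub_sum fun u' => kernelAct_eq_zero_of_kernelAct_eq_zero T hT hα p, hcross]
  simp only [epPotential, mul_sub, sum_sub_distrib]
  ring

lemma epFunctional_eq_sum_mul_epPotential (hT : ∀ u u', 0 ≤ T u u') (hα : ∀ u, 0 < α u) :
    epFunctional T Q α = ∑ u, α u * epPotential T Q α u := by
  rw [epFunctional_eq_klDiv_sub_klDiv_add Q hT hα, klDiv_self, klDiv_self, sub_self, zero_add]

lemma epFunctional_le_epPotential (hT : ∀ u u', 0 ≤ T u u') (hTsum : ∀ u, ∑ u', T u u' = 1)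
    (hα : ∀ u, 0 < α u) (hαsum : ∑ u, α u = 1)
    (hαmin : ∀ p : U → ℝ, (∀ u, 0 ≤ p u) → ∑ u, p u = 1 →
      epFunctional T Q α ≤ epFunctional T Q p) (u : U) :
    epFunctional T Q α ≤ epPotential T Q α u := by
  classical
  rw [epFunctional_eq_sum_mul_epPotential Q hT hα]
  set c := epPotential T Q α
  set d : U → ℝ := fun v => (if v = u then 1 else 0) - α v
  have hd : ∑ v, d v = 0 := by simp [d, sum_sub_distrib, hαsum]
  have hdc : ∑ v, d v * c v = c u - ∑ v, α v * c v := by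
    simp [d, sub_mul, sum_sub_distrib]
  rw [← sub_nonpos]
  refine nonpos_of_forall_mul_le_mul_sq (K := ∑ v, d v ^ 2 / α v) fun t ht0 ht1 => ?_
  set p : U → ℝ := fun v => α v + t * d v
  have hp : ∀ v, 0 ≤ p v := fun v => by
    have : 0 ≤ (1 - t) * α v + t * (if v = u then 1 else 0) := by
      have := (hα v).le
      split_ifs <;> positivity
    exact this.trans_eq (by simp only [p, d]; ring)
  have hpsum : ∑ v, p v = 1 := by simp [p, sum_add_distrib, ← mul_sum, hd, hαsum]
  have hpc : ∑ v, p v * c v = ∑ v, α v * c v + t * (c u - ∑ v, α v * c v) := by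
    simp only [p, add_mul, sum_add_distrib, mul_assoc, ← mul_sum, hdc]
  have hchi : klDiv p α ≤ ∑ v, d v ^ 2 / α v * t ^ 2 := by
    refine (klDiv_le_sum_sq_div hp hα (by rw [hpsum, hαsum])).trans_eq ?_
    exact sum_congr rfl fun v _ => by simp only [p]; ring
  have hklT : 0 ≤ klDiv (kernelAct T p) (kernelAct T α) :=
    klDiv_nonneg (kernelAct_nonneg T hT hp) (kernelAct_nonneg T hT fun v => (hα v).le)
      (fun u' => kernelAct_eq_zero_of_kernelAct_eq_zero T hT hα p)
      (by rw [sum_kernelAct T hTsum, sum_kernelAct T hTsum, hpsum, hαsum])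
  have hmin := hαmin p hp hpsum
  rw [epFunctional_eq_sum_mul_epPotential Q hT hα, epFunctional_eq_klDiv_sub_klDiv_add Q hT hα p,
    hpc] at hmin
  rw [← sum_mul] at hchi
  linarith

lemma epPotential_eq_epFunctional (hT : ∀ u u', 0 ≤ T u u') (hTsum : ∀ u, ∑ u', T u u' = 1)
    (hα : ∀ u, 0 < α u) (hαsum : ∑ u, α u = 1)
    (hαmin : ∀ p : U → ℝ, (∀ u, 0 ≤ p u) → ∑ u, p u = 1 →
      epFunctional T Q α ≤ epFunctional T Q p) (u : U) :
    epPotential T Q α u = epFunctional T Q α := by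
  have hmean := epFunctional_eq_sum_mul_epPotential Q hT hα
  refine (eq_sum_mul_of_forall_sum_mul_le hα hαsum (fun v => ?_) u).trans hmean.symm
  exact hmean ▸ epFunctional_le_epPotential Q hT hTsum hα hαsum hαmin v

end FiniteDistributions

/-- (Mismatch cost theorem for the inclusive Hamiltonian framework) If a
full-support probability distribution α minimizes σ̄ over all probability
distributions on U, then for every probability distribution β the mismatch cost
satisfies 𝒲 = σ̄(β) − σ̄(α) = D(β ‖ α) − D(Tβ ‖ Tα); in particular 𝒲 ≥ 0. -/
theorem mismatch_cost
    {U : Type*} [Fintype U]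
    (T : U → U → ℝ) (hT : ∀ u u', 0 ≤ T u u') (hTsum : ∀ u, ∑ u', T u u' = 1)
    (Q : U → ℝ)
    (α : U → ℝ) (hα : ∀ u, 0 < α u) (hαsum : ∑ u, α u = 1)
    (hαmin : ∀ p : U → ℝ, (∀ u, 0 ≤ p u) → ∑ u, p u = 1 →
      epFunctional T Q α ≤ epFunctional T Q p) :
    ∀ β : U → ℝ, (∀ u, 0 ≤ β u) → ∑ u, β u = 1 →
      epFunctional T Q β - epFunctional T Q α =
        klDiv β α - klDiv (kernelAct T β) (kernelAct T α) ∧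
      0 ≤ epFunctional T Q β - epFunctional T Q α := by
  intro β hβ hβsum
  have hlinear : ∑ u, β u * epPotential T Q α u = epFunctional T Q α := by
    simp only [epPotential_eq_epFunctional Q hT hTsum hα hαsum hαmin, ← sum_mul, hβsum, one_mul]
  refine ⟨?_, sub_nonneg.mpr (hαmin β hβ hβsum)⟩
  rw [epFunctional_eq_klDiv_sub_klDiv_add Q hT hα β, hlinear, add_sub_cancel_right]
end

section
/- (Modified exchange fluctuation theorem) In the XFT setup, for every q ∈ ℝ, P₀({x : Q₁(x) = q}) = e^{q(β₁ − β₂) + β₂ W} · P₀({x : Q₁ʳᵉᵛ(x) = −q}); that is, the probability of forward trajectories transferring heat q into bath 1 equals e^{qΔβ + β₂W} times the probability of reverse trajectories transferring heat −q into bath 1. -/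
/-! The Boltzmann weight of the initial state exceeds that of the final state by the factor
`exp (β₁ Q₁ + β₂ Q₂) = exp (q (β₁ - β₂) + β₂ W)` on every trajectory with `Q₁ = q`, and `F`
maps those trajectories bijectively onto the reverse trajectories with `Q₁ʳᵉᵛ = -q`. -/

open Finset

theorem sum_filter_eq_mul_sum_filter_of_equiv {X Y : Type*} [Fintype X] [Fintype Y] (e : X ≃ Y)
    {P : X → ℝ} {R : Y → ℝ} {f : X → ℝ} {g : Y → ℝ} {q c : ℝ}
    (hg : ∀ x, g (e x) = -f x) (hP : ∀ x, f x = q → P x = c * R (e x)) :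
    ∑ x ∈ univ.filter (f · = q), P x = c * ∑ y ∈ univ.filter (g · = -q), R y := by
  rw [mul_sum]
  exact sum_equiv e (fun x => by simp [hg]) fun x hx => hP x (mem_filter.1 hx).2

theorem Real.exp_neg_div_eq_exp_sub_mul (a b N : ℝ) :
    Real.exp (-a) / N = Real.exp (b - a) * (Real.exp (-b) / N) := by
  rw [mul_div_assoc', ← Real.exp_add, sub_add_eq_add_sub, add_neg_cancel, zero_sub]

theorem modified_exchange_fluctuation_theorem_general
    {V₁ V₂ U : Type*} [Fintype V₁] [Fintype V₂] [Fintype U]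
    (β₁ β₂ : ℝ) (B₁ : V₁ → ℝ) (B₂ : V₂ → ℝ)
    (F : V₁ × V₂ × U ≃ V₁ × V₂ × U)
    (Z : ℝ)
    (P0 : V₁ × V₂ × U → ℝ)
    (hP0 : ∀ x : V₁ × V₂ × U,
      P0 x = Real.exp (-(β₁ * B₁ x.1) - β₂ * B₂ x.2.1) / (Z * Fintype.card U))
    (Q₁ Q₂ Q₁rev : V₁ × V₂ × U → ℝ)
    (hQ₁ : ∀ x, Q₁ x = B₁ (F x).1 - B₁ x.1)
    (hQ₂ : ∀ x, Q₂ x = B₂ (F x).2.1 - B₂ x.2.1)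
    (hQ₁rev : ∀ x, Q₁rev x = B₁ (F.symm x).1 - B₁ x.1)
    (W : ℝ) (hW : ∀ x, Q₁ x + Q₂ x = W) :
    ∀ q : ℝ,
      ∑ x ∈ Finset.univ.filter (fun x : V₁ × V₂ × U => Q₁ x = q), P0 x =
        Real.exp (q * (β₁ - β₂) + β₂ * W) *
          ∑ x ∈ Finset.univ.filter (fun x : V₁ × V₂ × U => Q₁rev x = -q), P0 x := by
  intro q
  refine sum_filter_eq_mul_sum_filter_of_equiv F
    (fun x => by rw [hQ₁rev, hQ₁, F.symm_apply_apply, neg_sub]) fun x hx => ?_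
  rw [hP0, hP0, ← neg_add', ← neg_add',
    Real.exp_neg_div_eq_exp_sub_mul _ (β₁ * B₁ (F x).1 + β₂ * B₂ (F x).2.1)]
  congr 2
  linear_combination -β₁ * hQ₁ x - β₂ * hQ₂ x + β₂ * hW x + (β₁ - β₂) * hx

/-- (Modified exchange fluctuation theorem) In the XFT setup — two finite baths
with Boltzmann initial distributions at inverse temperatures β₁, β₂, a uniformly
distributed SOI, deterministic invertible joint dynamics F, and
trajectory-independent total work W — for every q ∈ ℝ the probability of forward
trajectories transferring heat q into bath 1 equals e^{q(β₁−β₂) + β₂W} times the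
probability of reverse trajectories transferring heat −q into bath 1. -/
theorem modified_exchange_fluctuation_theorem
    {V₁ V₂ U : Type*} [Fintype V₁] [Fintype V₂] [Fintype U] [Nonempty U]
    (β₁ β₂ : ℝ) (B₁ : V₁ → ℝ) (B₂ : V₂ → ℝ)
    (F : V₁ × V₂ × U ≃ V₁ × V₂ × U)
    (Z : ℝ)
    (hZ : Z = ∑ v₁ : V₁, ∑ v₂ : V₂, Real.exp (-(β₁ * B₁ v₁) - β₂ * B₂ v₂))
    (P0 : V₁ × V₂ × U → ℝ)
    (hP0 : ∀ x : V₁ × V₂ × U,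
      P0 x = Real.exp (-(β₁ * B₁ x.1) - β₂ * B₂ x.2.1) / (Z * Fintype.card U))
    (Q₁ Q₂ Q₁rev : V₁ × V₂ × U → ℝ)
    (hQ₁ : ∀ x, Q₁ x = B₁ (F x).1 - B₁ x.1)
    (hQ₂ : ∀ x, Q₂ x = B₂ (F x).2.1 - B₂ x.2.1)
    (hQ₁rev : ∀ x, Q₁rev x = B₁ (F.symm x).1 - B₁ x.1)
    (W : ℝ) (hW : ∀ x, Q₁ x + Q₂ x = W) :
    ∀ q : ℝ,
      ∑ x ∈ Finset.univ.filter (fun x : V₁ × V₂ × U => Q₁ x = q), P0 x =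
        Real.exp (q * (β₁ - β₂) + β₂ * W) *
          ∑ x ∈ Finset.univ.filter (fun x : V₁ × V₂ × U => Q₁rev x = -q), P0 x :=
  modified_exchange_fluctuation_theorem_general β₁ β₂ B₁ B₂ F Z P0 hP0 Q₁ Q₂ Q₁rev hQ₁ hQ₂ hQ₁rev W
    hW
end

section
/- (Legal triples and invertibility of the full dynamics) Fix a DFA with state set S, alphabet Σ, transition function f : S × Σ → S and start state q₀, fix τ ∈ ℕ, and let words be functions ω : {0,…,τ} → Σ. Define legal triples inductively: (q₀, 0, ω) is legal for every ω, and if (s, z, ω) is legal with z < τ then (f(s, ω[z]), z+1, ω) is legal. Then: (i) for every word ω and every 0 ≤ z ≤ τ there is exactly one state s such that (s, z, ω) is legal, namely the state reached from q₀ by reading ω[0], …, ω[z−1]; and (ii) the map Φ defined on legal triples by Φ(s, z, ω) := (f(s, ω[z]), z+1, ω) for z < τ and Φ(s, τ, ω) := (q₀, 0, ω) is a bijection of the set of legal triples onto itself, so the DFA's (generally non-invertible) update function is implemented by a deterministic invertible dynamics on the set of legal triples. -/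
/-!
Legal triples are exactly the triples `(run ω z, z, ω)`, where `run ω z` is the state
reached after reading `ω[0], …, ω[z−1]`. So they are parametrised injectively by the pairs
`(z, ω)`, and under this parametrisation `Φ` becomes the cyclic rotation
`z ↦ z + 1 mod (τ + 1)` of the pointer, which is a permutation.
-/

/-- The state reached from the start state `q0` after reading the first `z`
symbols `ω[0], …, ω[z−1]` of the word `ω : Fin (τ+1) → A`. -/
def dfaRun {S A : Type*} (f : S → A → S) (q0 : S) {τ : ℕ}
    (ω : Fin (τ + 1) → A) : ℕ → S
  | 0 => q0
  | z + 1 =>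
    if h : z < τ + 1 then f (dfaRun f q0 ω z) (ω ⟨z, h⟩) else dfaRun f q0 ω z

/-- Legal triples: `(q₀, 0, ω)` is legal for every word `ω`, and if `(s, z, ω)`
is legal with `z < τ` then `(f(s, ω[z]), z+1, ω)` is legal. -/
inductive Legal {S A : Type*} (f : S → A → S) (q0 : S) (τ : ℕ) :
    S → Fin (τ + 1) → (Fin (τ + 1) → A) → Prop
  | base (ω : Fin (τ + 1) → A) : Legal f q0 τ q0 0 ω
  | step {s : S} {z : Fin (τ + 1)} {ω : Fin (τ + 1) → A}
      (h : (z : ℕ) < τ) (hl : Legal f q0 τ s z ω) :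
      Legal f q0 τ (f s (ω z)) ⟨(z : ℕ) + 1, by omega⟩ ω

/-- The full-system dynamics `Φ`: on a triple `(s, z, ω)` with `z < τ` it acts
as `(s, z, ω) ↦ (f(s, ω[z]), z+1, ω)`, and it sends `(s, τ, ω)` to
`(q₀, 0, ω)`. -/
def Phi {S A : Type*} (f : S → A → S) (q0 : S) (τ : ℕ) :
    S × Fin (τ + 1) × (Fin (τ + 1) → A) → S × Fin (τ + 1) × (Fin (τ + 1) → A) :=
  fun p =>
    if h : (p.2.1 : ℕ) < τ then
      (f p.1 (p.2.2 p.2.1), ⟨(p.2.1 : ℕ) + 1, by omega⟩, p.2.2)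
    else (q0, 0, p.2.2)

open Function

section

variable {S A : Type*} (f : S → A → S) (q0 : S) {τ : ℕ}

theorem dfaRun_succ (ω : Fin (τ + 1) → A) {z : ℕ} (hz : z < τ + 1) :
    dfaRun f q0 ω (z + 1) = f (dfaRun f q0 ω z) (ω ⟨z, hz⟩) :=
  dif_pos hz

theorem legal_iff_eq_dfaRun (ω : Fin (τ + 1) → A) (z : Fin (τ + 1)) (s : S) :
    Legal f q0 τ s z ω ↔ s = dfaRun f q0 ω z := by
  constructor
  · intro h
    induction h with
    | base => rfl
    | step _ _ ih => rw [ih, dfaRun_succ]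
  · rintro rfl
    induction z using Fin.induction with
    | zero => exact Legal.base ω
    | succ i ih =>
      exact dfaRun_succ f q0 ω (Nat.lt_succ_of_lt i.is_lt) ▸ Legal.step i.is_lt ih

variable (τ)

def legalTriple (p : Fin (τ + 1) × (Fin (τ + 1) → A)) :
    S × Fin (τ + 1) × (Fin (τ + 1) → A) :=
  (dfaRun f q0 p.2 p.1, p)

theorem legalTriple_injective : Injective (legalTriple f q0 τ) :=
  fun _ _ h => congrArg Prod.snd h

theorem setOf_legal_eq_range_legalTriple :
    {p : S × Fin (τ + 1) × (Fin (τ + 1) → A) | Legal f q0 τ p.1 p.2.1 p.2.2} =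
      Set.range (legalTriple f q0 τ) := by
  ext ⟨s, z, ω⟩
  simp [legal_iff_eq_dfaRun, legalTriple, eq_comm]

theorem semiconj_legalTriple_phi :
    Semiconj (legalTriple f q0 τ) (Prod.map (finRotate (τ + 1)) id) (Phi f q0 τ) := by
  rintro ⟨⟨n, hn⟩, ω⟩
  by_cases hnτ : n < τ
  · simp [Phi, legalTriple, hnτ, finRotate_of_lt hnτ, dfaRun_succ f q0 ω hn]
  · obtain rfl : n = τ := by omega
    rw [Prod.map_apply, finRotate_last']
    simp [Phi, legalTriple, dfaRun]

end

/-- (Legal triples and invertibility of the full dynamics)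
(i) For every word ω and every pointer z there is exactly one state s with
(s, z, ω) legal, namely the state reached from q₀ by reading ω[0], …, ω[z−1];
(ii) Φ maps the set of legal triples bijectively onto itself, so the DFA's
(generally non-invertible) update function is implemented by a deterministic
invertible dynamics on the set of legal triples. -/
theorem legal_unique_and_phi_bijOn
    {S A : Type*} (f : S → A → S) (q0 : S) (τ : ℕ) :
    (∀ (ω : Fin (τ + 1) → A) (z : Fin (τ + 1)) (s : S),
      Legal f q0 τ s z ω ↔ s = dfaRun f q0 ω (z : ℕ)) ∧
    Set.BijOn (Phi f q0 τ)
      {p : S × Fin (τ + 1) × (Fin (τ + 1) → A) | Legal f q0 τ p.1 p.2.1 p.2.2}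
      {p : S × Fin (τ + 1) × (Fin (τ + 1) → A) | Legal f q0 τ p.1 p.2.1 p.2.2} := by
  refine ⟨legal_iff_eq_dfaRun f q0, ?_⟩
  rw [setOf_legal_eq_range_legalTriple]
  exact (semiconj_legalTriple_phi f q0 τ).bijOn_range
    ((finRotate _).bijective.prodMap bijective_id) (legalTriple_injective f q0 τ)
end
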